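/- Fix an integer N ≥ 2 and reals T_− < T_+. Set A = (T_+−T_−)(T_+ + N T_−)/(N(N+1)), B = T_−(T_+−T_−)/N, C = (T_+−T_−)²/(N(N+1)), D = T_−², E = (T_+−T_−)²/(2N(N+1)) + T_−², and let m_k = T_− + (k/N)(T_+−T_−). Define M̃_{k,ℓ} = A k + B ℓ + C k ℓ + D for 0 ≤ k < ℓ ≤ N, and M̃_{k,k} = C k² + (A+B) k + E for 0 ≤ k ≤ N. Then M̃ satisfies: (i) (1/4)(M̃_{k−1,ℓ} + M̃_{k+1,ℓ} + M̃_{k,ℓ−1} + M̃_{k,ℓ+1}) = M̃_{k,ℓ} whenever 1 < k+1 < ℓ < N; (ii) (3/10)(M̃_{ℓ−2,ℓ} + M̃_{ℓ−1,ℓ+1}) + (1/5)(M̃_{ℓ−1,ℓ−1} + M̃_{ℓ,ℓ}) = M̃_{ℓ−1,ℓ} for 1 < ℓ < N; (iii) (1/4)(M̃_{k−1,k−1} + M̃_{k−1,k} + M̃_{k+1,k+1} + M̃_{k,k+1}) = M̃_{k,k} for 0 < k < N; (iv) M̃_{0,ℓ} = T_− m_ℓ for 1 ≤ ℓ ≤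 N and M̃_{k,N} = m_k T_+ for 0 ≤ k ≤ N−1. -/
import Mathlib


/-- The linear interpolation `m_k = T₋ + (k/N)(T₊ − T₋)`. -/
noncomputable def mlin (N : ℕ) (Tm Tp : ℝ) (k : ℕ) : ℝ :=
  Tm + (k : ℝ) / N * (Tp - Tm)

/-- The explicit modified second moments `M̃_{k,ℓ}` (for `k ≤ ℓ`). -/
noncomputable def Mt (N : ℕ) (Tm Tp : ℝ) (k l : ℕ) : ℝ :=
  let A : ℝ := (Tp - Tm) * (Tp + N * Tm) / (N * (N + 1))
  let B : ℝ := Tm * (Tp - Tm) / N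
  let C : ℝ := (Tp - Tm) ^ 2 / (N * (N + 1))
  let D : ℝ := Tm ^ 2
  let E : ℝ := (Tp - Tm) ^ 2 / (2 * N * (N + 1)) + Tm ^ 2
  if k < l then A * k + B * l + C * (k * l) + D
  else C * k ^ 2 + (A + B) * k + E

set_option maxHeartbeats 2000000 in
/-- the explicit `M̃` solves the two-point correlation system with the
modified corner boundary conditions. -/
theorem explicit_solution_two_point_system
    (N : ℕ) (hN : 2 ≤ N) (Tm Tp : ℝ) (hT : Tm < Tp) :
    (∀ k l : ℕ, 1 ≤ k → k + 1 < l → l < N →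
        (1 / 4) * (Mt N Tm Tp (k - 1) l + Mt N Tm Tp (k + 1) l
            + Mt N Tm Tp k (l - 1) + Mt N Tm Tp k (l + 1))
          = Mt N Tm Tp k l)
    ∧ (∀ l : ℕ, 1 < l → l < N →
        (3 / 10) * (Mt N Tm Tp (l - 2) l + Mt N Tm Tp (l - 1) (l + 1))
            + (1 / 5) * (Mt N Tm Tp (l - 1) (l - 1) + Mt N Tm Tp l l)
          = Mt N Tm Tp (l - 1) l)
    ∧ (∀ k : ℕ, 0 < k → k < N →
        (1 / 4) * (Mt N Tm Tp (k - 1) (k - 1) + Mt N Tm Tp (k - 1) k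
            + Mt N Tm Tp (k + 1) (k + 1) + Mt N Tm Tp k (k + 1))
          = Mt N Tm Tp k k)
    ∧ (∀ l : ℕ, 1 ≤ l → l ≤ N → Mt N Tm Tp 0 l = Tm * mlin N Tm Tp l)
    ∧ (∀ k : ℕ, k < N → Mt N Tm Tp k N = mlin N Tm Tp k * Tp) := by
  have hN0 : (N : ℝ) ≠ 0 := by positivity
  have hN1 : (N : ℝ) + 1 ≠ 0 := by positivity
  refine ⟨?_, ?_, ?_, ?_, ?_⟩
  · intro k l hk hkl hlN
    obtain ⟨k, rfl⟩ := Nat.exists_eq_add_of_le hk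
    obtain ⟨j, rfl⟩ := Nat.exists_eq_add_of_lt hkl
    simp only [Mt]
    rw [if_pos (by omega), if_pos (by omega), if_pos (by omega), if_pos (by omega),
      if_pos (by omega)]
    simp only [Nat.add_sub_cancel_left, Nat.add_sub_cancel]
    push_cast
    field_simp
    ring
  · intro l h1l hlN
    obtain ⟨j, rfl⟩ := Nat.exists_eq_add_of_lt h1l
    simp only [Mt]
    rw [if_pos (by omega), if_pos (by omega), if_neg (by omega), if_neg (by omega),
      if_pos (by omega)]
    have h1 : (1 + j + 1 - 2) = j := by omega
    have h2 : (1 + j + 1 - 1) = 1 + j := by omega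
    rw [h1, h2]
    push_cast
    field_simp
    ring
  · intro k hk hkN
    obtain ⟨k, rfl⟩ := Nat.exists_eq_add_of_le hk
    simp only [Mt]
    rw [if_neg (by omega), if_pos (by omega), if_neg (by omega), if_pos (by omega),
      if_neg (by omega)]
    simp only [Nat.add_sub_cancel_left, Nat.add_sub_cancel]
    push_cast
    field_simp
    ring
  · intro l hl hlN
    simp only [Mt, mlin]
    rw [if_pos (by omega)]
    push_cast
    field_simp
    ring
  · intro k hkN
    simp only [Mt, mlin]
    rw [if_pos hkN]
    push_cast
    field_simp
    ring
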